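/- The number of bubbles of size at most 2n-2, counted across all linear chord diagrams on 2n vertices, is asymptotic to (2 - e^{-1})·(2n-1)!!: the sequence n ↦ (∑_{p=1}^{2n-2} B_{n,p}) / (2n-1)!! tends to 2 - e^{-1} as n → ∞, where (2n-1)!! = (2n)!/(2^n·n!) and e is Euler's number. -/

import Mathlib

/-!
A bubble is determined by its left end `a`: `a = 1` or `{a-2, a-1}` is a short chord, and
`{a, a+1}` is not. Prescribing `k` disjoint short chords leaves a free matching of `2n - 2k`
points, so `(2n-2k-1)!!` diagrams contain them; summing over left ends gives
`2 (2n-1)!! - 3 (2n-3)!!` bubbles in all. Those of size `2n` are the diagrams without short chords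
and none has size `2n-1`, so the ratio in question is `2 - 3/(2n-1) - d n 0 / (2n-1)!!`.

It remains that `d n 0 / (2n-1)!! → e⁻¹`. By the Bonferroni inequalities this ratio lies between
consecutive partial sums of `∑ (-1)^i m_i(n)`, where `m_i(n)` is the mean of `C(X, i)` for `X` the
number of short chords of a random diagram. Double counting gives
`m_i(n) = M(2n, i) (2n-2i-1)!! / (2n-1)!!` with `M(2n, i)` the number of `i`-matchings of the path
on `2n` vertices, and `M(2n, i) ~ (2n)^i / i!` yields `m_i(n) → 1 / i!`.
-/

open Finset

/-- A linear chord diagram on `2*n` vertices: a fixed-point-free involution of `Fin (2*n)`.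
Vertex `v ∈ {1,...,2n}` is represented by the index `v-1 : Fin (2*n)`. -/
def IsLCD (n : ℕ) (f : Fin (2*n) → Fin (2*n)) : Prop :=
  ∀ i, f (f i) = i ∧ f i ≠ i

/-- The chord `{i, i+1}` (1-based vertices) is a short chord of `f`. -/
def IsShort (n : ℕ) (f : Fin (2*n) → Fin (2*n)) (i : ℕ) : Prop :=
  ∃ (_h1 : 1 ≤ i) (h2 : i < 2*n), f ⟨i-1, by omega⟩ = ⟨i, h2⟩

/-- The interval `[a,b] ⊆ {1,...,2n}` (1-based) is a bubble of the diagram `f`: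
it contains no short chord, its left end is the start of the diagram or is preceded
by the short chord `{a-2,a-1}`, and its right end is the end of the diagram or is
followed by the short chord `{b+1,b+2}`. -/
def IsBubble (n : ℕ) (f : Fin (2*n) → Fin (2*n)) (a b : ℕ) : Prop :=
  1 ≤ a ∧ a ≤ b ∧ b ≤ 2*n ∧
  (∀ i, a ≤ i → i + 1 ≤ b → ¬ IsShort n f i) ∧
  (a = 1 ∨ IsShort n f (a-2)) ∧
  (b = 2*n ∨ IsShort n f (b+1))

open scoped Classical in
/-- `B n p` : the number of pairs `(D, [a,b])` where `D` is a linear chord diagram on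
`2n` vertices and `[a,b]` is a bubble of `D` of size `p = b - a + 1`. -/
noncomputable def B (n p : ℕ) : ℕ :=
  ((univ ×ˢ (Finset.Icc 1 (2*n) ×ˢ Finset.Icc 1 (2*n))).filter
    (fun x : (Fin (2*n) → Fin (2*n)) × ℕ × ℕ =>
      IsLCD n x.1 ∧ IsBubble n x.1 x.2.1 x.2.2 ∧ x.2.2 - x.2.1 + 1 = p)).card

open scoped Classical in
/-- `d n s` : the number of linear chord diagrams on `2n` vertices having exactly `s`
short chords. -/
noncomputable def d (n s : ℕ) : ℕ :=
  (univ.filter (fun f : Fin (2*n) → Fin (2*n) =>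
    IsLCD n f ∧ ((Finset.Icc 1 (2*n-1)).filter (fun i => IsShort n f i)).card = s)).card

open scoped Classical in
/-- `pathMatch m j` : the number of `j`-edge matchings of the path graph on `m` vertices
`{1,...,m}` with edges `{i,i+1}`, `1 ≤ i ≤ m-1`.  An edge is encoded by its left
endpoint; a set of edges is a matching iff no two left endpoints are consecutive. -/
noncomputable def pathMatch (m j : ℕ) : ℕ :=
  (((Finset.Icc 1 (m-1)).powerset).filter
    (fun S => S.card = j ∧ ∀ i ∈ S, i + 1 ∉ S)).card

/-- The double factorial `(2m-1)!! = (2m)! / (2^m * m!)`, so `(-1)!! = 1`. -/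
def doubleFact (m : ℕ) : ℕ := (2*m).factorial / (2^m * m.factorial)

open scoped Nat

lemma doubleFact_eq_doubleFactorial (m : ℕ) : doubleFact m = (2 * m - 1)‼ := by
  cases m with
  | zero => rfl
  | succ m =>
    have h := Nat.factorial_eq_mul_doubleFactorial (2 * m + 1)
    rw [show 2 * m + 1 + 1 = 2 * (m + 1) by ring, Nat.doubleFactorial_two_mul] at h
    rw [doubleFact, h, show 2 * (m + 1) - 1 = 2 * m + 1 by omega,
      Nat.mul_div_cancel_left _ (by positivity)]

lemma doubleFact_zero : doubleFact 0 = 1 := rfl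

lemma doubleFact_succ (m : ℕ) : doubleFact (m + 1) = (2 * m + 1) * doubleFact m := by
  rw [doubleFact_eq_doubleFactorial, doubleFact_eq_doubleFactorial]
  cases m with
  | zero => rfl
  | succ m => exact Nat.doubleFactorial_add_two (2 * m + 1)

lemma doubleFact_pos (m : ℕ) : 0 < doubleFact m := by
  rw [doubleFact_eq_doubleFactorial]; exact Nat.doubleFactorial_pos _

section Involutions

variable {α : Type*} [Fintype α] [DecidableEq α]

def fpfInvolutionsOn (s : Finset α) : Finset (α → α) :=
  {f | (∀ x ∈ s, f x ∈ s ∧ f (f x) = x ∧ f x ≠ x) ∧ ∀ x ∉ s, f x = x}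

@[simp]
lemma mem_fpfInvolutionsOn {s : Finset α} {f : α → α} :
    f ∈ fpfInvolutionsOn s ↔ (∀ x ∈ s, f x ∈ s ∧ f (f x) = x ∧ f x ≠ x) ∧ ∀ x ∉ s, f x = x := by
  simp [fpfInvolutionsOn]

lemma card_filter_eqOn_fpfInvolutionsOn {s P : Finset α} {σ : α → α} (hPs : P ⊆ s)
    (hσ : ∀ x ∈ P, σ x ∈ P ∧ σ (σ x) = x ∧ σ x ≠ x) :
    ((fpfInvolutionsOn s).filter fun f => ∀ x ∈ P, f x = σ x).card
      = (fpfInvolutionsOn (s \ P)).card := by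
  refine Finset.card_nbij' (fun f x => if x ∈ P then x else f x)
    (fun g x => if x ∈ P then σ x else g x) ?_ ?_ ?_ ?_ <;> intro f hf <;>
    simp only [Finset.coe_filter, Finset.mem_coe, Set.mem_ofPred_eq, mem_fpfInvolutionsOn,
      Finset.mem_sdiff] at hf ⊢
  · grind
  · grind
  · funext x; grind
  · funext x; grind

theorem card_fpfInvolutionsOn (m : ℕ) :
    ∀ s : Finset α, s.card = 2 * m → (fpfInvolutionsOn s).card = doubleFact m := by
  induction m with
  | zero =>
    intro s hs
    rw [Finset.card_eq_zero.1 hs, doubleFact_zero, Finset.card_eq_one]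
    exact ⟨id, Finset.eq_singleton_iff_unique_mem.2
      ⟨by simp, fun f hf => funext fun x => by simp_all⟩⟩
  | succ m ih =>
    intro s hs
    obtain ⟨a, ha⟩ : s.Nonempty := Finset.card_pos.1 (by omega)
    have hmaps : ∀ f ∈ fpfInvolutionsOn s, f a ∈ s.erase a := fun f hf => by
      simp only [mem_fpfInvolutionsOn] at hf
      grind
    -- fixing the chord `{a, b}` leaves an involution of `s \ {a, b}`
    have hfiber : ∀ b ∈ s.erase a,
        ((fpfInvolutionsOn s).filter fun f => f a = b).card = doubleFact m := by
      intro b hb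
      obtain ⟨hba, hbs⟩ := Finset.mem_erase.1 hb
      have hpair : {a, b} ⊆ s := Finset.insert_subset ha (Finset.singleton_subset_iff.2 hbs)
      have hcard : (s \ {a, b}).card = 2 * m := by
        rw [Finset.card_sdiff_of_subset hpair, Finset.card_pair hba.symm]; omega
      rw [← ih _ hcard, ← card_filter_eqOn_fpfInvolutionsOn hpair (σ := Equiv.swap a b) (by
        simp only [Finset.mem_insert, Finset.mem_singleton]; grind)]
      congr 1
      refine Finset.filter_congr fun f hf => ?_
      simp only [mem_fpfInvolutionsOn] at hf
      simp only [Finset.mem_insert, Finset.mem_singleton]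
      grind
    rw [Finset.card_eq_sum_card_fiberwise hmaps, Finset.sum_congr rfl hfiber, Finset.sum_const,
      Finset.card_erase_of_mem ha, hs, doubleFact_succ, smul_eq_mul,
      show 2 * (m + 1) - 1 = 2 * m + 1 by omega]

end Involutions

open scoped Classical

noncomputable def lcds (n : ℕ) : Finset (Fin (2 * n) → Fin (2 * n)) :=
  Finset.univ.filter (IsLCD n)

noncomputable def shortChords (n : ℕ) (f : Fin (2 * n) → Fin (2 * n)) : Finset ℕ :=
  (Finset.Icc 1 (2 * n - 1)).filter (IsShort n f)

section ShortChords

variable {n : ℕ} {f : Fin (2 * n) → Fin (2 * n)}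

lemma IsShort.one_le {i : ℕ} (h : IsShort n f i) : 1 ≤ i := by
  obtain ⟨h1, -, -⟩ := h
  exact h1

lemma IsShort.lt_two_mul {i : ℕ} (h : IsShort n f i) : i < 2 * n := by
  obtain ⟨-, h2, -⟩ := h
  exact h2

lemma IsShort.mem_Icc {i : ℕ} (h : IsShort n f i) : i ∈ Finset.Icc 1 (2 * n - 1) :=
  Finset.mem_Icc.2 ⟨h.one_le, by have := h.lt_two_mul; omega⟩

@[simp]
lemma mem_shortChords {i : ℕ} : i ∈ shortChords n f ↔ IsShort n f i := by
  simp only [shortChords, Finset.mem_filter, and_iff_right_iff_imp]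
  exact IsShort.mem_Icc

lemma isShort_succ_iff (x : Fin (2 * n)) : IsShort n f (x + 1) ↔ (f x : ℕ) = x + 1 := by
  refine ⟨fun ⟨_, h2, hfx⟩ => by simpa using congrArg Fin.val hfx, fun h => ⟨by omega, ?_, ?_⟩⟩
  · have := (f x).isLt; omega
  · exact Fin.ext (by simpa using h)

lemma isShort_iff_of_isLCD (hf : IsLCD n f) (x : Fin (2 * n)) :
    IsShort n f x ↔ (f x : ℕ) + 1 = x := by
  constructor
  · rintro ⟨h1, h2, hfx⟩
    have := congrArg (fun y => (f y : ℕ)) hfx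
    simp only [(hf _).1, Fin.eta] at this
    omega
  · intro h
    have := (isShort_succ_iff (f := f) (f x)).2 (by rw [(hf x).1]; omega)
    rwa [h] at this

lemma IsShort.not_succ (hf : IsLCD n f) {i : ℕ} (h : IsShort n f i) : ¬ IsShort n f (i + 1) := by
  obtain ⟨-, hi, -⟩ := id h
  rw [isShort_succ_iff ⟨i, hi⟩]
  have := (isShort_iff_of_isLCD hf ⟨i, hi⟩).1 h
  simp only at this ⊢; omega

end ShortChords

section PrescribedShortChords

variable {n : ℕ} {S : Finset ℕ}

/-- The endpoints, as `0`-based indices, of the short chords at the (`1`-based) positions in `S`. -/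
noncomputable def shortChordEnds (n : ℕ) (S : Finset ℕ) : Finset (Fin (2 * n)) :=
  {x | (x : ℕ) + 1 ∈ S ∨ (x : ℕ) ∈ S}

def shortChordPartner (n : ℕ) (S : Finset ℕ) (x : Fin (2 * n)) : Fin (2 * n) :=
  if h : (x : ℕ) + 1 ∈ S ∧ (x : ℕ) + 1 < 2 * n then ⟨x + 1, h.2⟩
  else if (x : ℕ) ∈ S then ⟨x - 1, by omega⟩ else x

lemma shortChordPartner_val_of_succ_mem (hS : S ⊆ Finset.Icc 1 (2 * n - 1)) {x : Fin (2 * n)}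
    (h : (x : ℕ) + 1 ∈ S) : (shortChordPartner n S x : ℕ) = x + 1 := by
  have := Finset.mem_Icc.1 (hS h)
  rw [shortChordPartner, dif_pos ⟨h, by omega⟩]

lemma shortChordPartner_val_of_mem (hsep : ∀ i ∈ S, i + 1 ∉ S) {x : Fin (2 * n)}
    (h : (x : ℕ) ∈ S) : (shortChordPartner n S x : ℕ) = x - 1 := by
  rw [shortChordPartner, dif_neg (fun h' => hsep _ h h'.1), if_pos h]

lemma shortChordPartner_spec (hS : S ⊆ Finset.Icc 1 (2 * n - 1)) (hsep : ∀ i ∈ S, i + 1 ∉ S) :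
    ∀ x ∈ shortChordEnds n S, shortChordPartner n S x ∈ shortChordEnds n S ∧
      shortChordPartner n S (shortChordPartner n S x) = x ∧ shortChordPartner n S x ≠ x := by
  intro x hx
  simp only [shortChordEnds, Finset.mem_filter, Finset.mem_univ, true_and] at hx ⊢
  rw [← Fin.val_ne_iff, Fin.ext_iff]
  rcases hx with h | h
  · have h1 := shortChordPartner_val_of_succ_mem hS h
    have h2 := shortChordPartner_val_of_mem hsep (x := shortChordPartner n S x) (by rwa [h1])
    rw [h1] at h2 ⊢
    exact ⟨Or.inr h, by omega, by omega⟩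
  · have hx1 := (Finset.mem_Icc.1 (hS h)).1
    have h1 := shortChordPartner_val_of_mem hsep h
    have h2 := shortChordPartner_val_of_succ_mem hS (x := shortChordPartner n S x)
      (by rwa [h1, Nat.sub_add_cancel hx1])
    rw [h1] at h2 ⊢
    exact ⟨Or.inl (by rwa [Nat.sub_add_cancel hx1]), by omega, by omega⟩

lemma card_shortChordEnds (hS : S ⊆ Finset.Icc 1 (2 * n - 1)) (hsep : ∀ i ∈ S, i + 1 ∉ S) :
    (shortChordEnds n S).card = 2 * S.card := by
  have himage : (shortChordEnds n S).image Fin.val = S.image (· - 1) ∪ S := by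
    ext t
    simp only [shortChordEnds, Finset.mem_image, Finset.mem_filter, Finset.mem_univ, true_and,
      Finset.mem_union]
    constructor
    · rintro ⟨x, hx | hx, rfl⟩
      · exact Or.inl ⟨_, hx, by omega⟩
      · exact Or.inr hx
    · rintro (⟨u, hu, rfl⟩ | ht)
      · have := Finset.mem_Icc.1 (hS hu)
        exact ⟨⟨u - 1, by omega⟩, Or.inl (by simpa [Nat.sub_add_cancel this.1] using hu), rfl⟩
      · have := Finset.mem_Icc.1 (hS ht)
        exact ⟨⟨t, by omega⟩, Or.inr ht, rfl⟩
  rw [← Finset.card_image_of_injective _ Fin.val_injective, himage,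
    Finset.card_union_of_disjoint, Finset.card_image_of_injOn, two_mul]
  · intro u hu v hv huv
    have := Finset.mem_Icc.1 (hS hu); have := Finset.mem_Icc.1 (hS hv)
    simp only at huv; omega
  · refine Finset.disjoint_left.2 fun t ht ht' => ?_
    obtain ⟨u, hu, rfl⟩ := Finset.mem_image.1 ht
    have := Finset.mem_Icc.1 (hS hu)
    exact hsep _ ht' (by rwa [Nat.sub_add_cancel this.1])

lemma subset_shortChords_iff {f : Fin (2 * n) → Fin (2 * n)} (hf : IsLCD n f)
    (hS : S ⊆ Finset.Icc 1 (2 * n - 1)) (hsep : ∀ i ∈ S, i + 1 ∉ S) :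
    S ⊆ shortChords n f ↔ ∀ x ∈ shortChordEnds n S, f x = shortChordPartner n S x := by
  simp only [shortChordEnds, Finset.mem_filter, Finset.mem_univ, true_and, Fin.ext_iff]
  constructor
  · rintro hsub x (h | h)
    · rw [shortChordPartner_val_of_succ_mem hS h]
      exact (isShort_succ_iff x).1 (mem_shortChords.1 (hsub h))
    · rw [shortChordPartner_val_of_mem hsep h]
      have := (isShort_iff_of_isLCD hf x).1 (mem_shortChords.1 (hsub h))
      omega
  · intro hP t ht
    have := Finset.mem_Icc.1 (hS ht)
    have key := (isShort_succ_iff (f := f) ⟨t - 1, by omega⟩).2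
    simp only [Nat.sub_add_cancel this.1] at key
    refine mem_shortChords.2 (key ?_)
    rw [hP _ (Or.inl (by simpa [Nat.sub_add_cancel this.1] using ht)),
      shortChordPartner_val_of_succ_mem hS (by simpa [Nat.sub_add_cancel this.1] using ht)]
    simp only [Nat.sub_add_cancel this.1]

lemma lcds_eq_fpfInvolutionsOn (n : ℕ) : lcds n = fpfInvolutionsOn Finset.univ := by
  ext f
  simp [lcds, IsLCD, and_comm]

theorem card_lcds_filter_subset_shortChords (hS : S ⊆ Finset.Icc 1 (2 * n - 1))
    (hsep : ∀ i ∈ S, i + 1 ∉ S) :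
    ((lcds n).filter fun f => S ⊆ shortChords n f).card = doubleFact (n - S.card) := by
  have hends := card_shortChordEnds hS hsep
  have hle : 2 * S.card ≤ 2 * n := by
    simpa [hends] using (shortChordEnds n S).card_le_univ
  have hcompl : (Finset.univ \ shortChordEnds n S).card = 2 * (n - S.card) := by
    rw [← Finset.compl_eq_univ_sdiff, Finset.card_compl, Fintype.card_fin, hends]; omega
  rw [← card_fpfInvolutionsOn _ _ hcompl,
    ← card_filter_eqOn_fpfInvolutionsOn (Finset.subset_univ _) (shortChordPartner_spec hS hsep),
    ← lcds_eq_fpfInvolutionsOn]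
  congr 1
  ext f
  simp only [Finset.mem_filter]
  exact and_congr_right fun hf => subset_shortChords_iff (Finset.mem_filter.1 hf).2 hS hsep

end PrescribedShortChords

section Bubbles

variable {n : ℕ} {f : Fin (2 * n) → Fin (2 * n)}

def IsBubbleStart (n : ℕ) (f : Fin (2 * n) → Fin (2 * n)) (a : ℕ) : Prop :=
  (a = 1 ∨ IsShort n f (a - 2)) ∧ ¬ IsShort n f a

lemma IsBubble.isBubbleStart (hf : IsLCD n f) {a b : ℕ} (h : IsBubble n f a b) :
    IsBubbleStart n f a := by
  obtain ⟨-, hab, -, hfree, hleft, hright⟩ := h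
  refine ⟨hleft, fun ha => ?_⟩
  rcases Nat.lt_or_ge a b with hlt | hle
  · exact hfree a le_rfl hlt ha
  · rcases hright with rfl | hb
    · have := ha.lt_two_mul; omega
    · exact ha.not_succ hf (by rwa [show a + 1 = b + 1 by omega])

lemma IsBubble.right_unique (hf : IsLCD n f) {a b₁ b₂ : ℕ} (h₁ : IsBubble n f a b₁)
    (h₂ : IsBubble n f a b₂) : b₁ = b₂ := by
  wlog hlt : b₁ < b₂ generalizing b₁ b₂
  · rcases Nat.lt_or_ge b₂ b₁ with h | h
    · exact (this h₂ h₁ h).symm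
    · omega
  obtain ⟨-, hab₁, -, -, -, hright₁⟩ := h₁
  obtain ⟨-, -, hb₂, hfree₂, -, hright₂⟩ := h₂
  have hshort : IsShort n f (b₁ + 1) := hright₁.resolve_left (by omega)
  rcases Nat.lt_or_ge (b₁ + 1) b₂ with h | h
  · exact absurd hshort (hfree₂ _ (by omega) h)
  · have hb : b₂ = b₁ + 1 := by omega
    subst hb
    rcases hright₂ with h2n | h'
    · have := hshort.lt_two_mul; omega
    · exact absurd h' (hshort.not_succ hf)

lemma IsBubbleStart.exists_isBubble {a : ℕ} (ha : a ∈ Finset.Icc 1 (2 * n))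
    (h : IsBubbleStart n f a) : ∃ b, IsBubble n f a b := by
  rw [Finset.mem_Icc] at ha
  -- the bubble ends just before the first short chord at or after `a`
  have hex : ∃ t, a ≤ t ∧ (IsShort n f t ∨ t = 2 * n + 1) := ⟨2 * n + 1, by omega, Or.inr rfl⟩
  have hspec := Nat.find_spec hex
  have hmin : ∀ t, a ≤ t → t < Nat.find hex → ¬ IsShort n f t := fun t hat ht hs =>
    Nat.find_min hex ht ⟨hat, Or.inl hs⟩
  have hfind : a < Nat.find hex := by
    rcases Nat.eq_or_lt_of_le hspec.1 with heq | hlt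
    · rcases hspec.2 with hs | h2n
      · exact absurd (heq ▸ hs) h.2
      · omega
    · exact hlt
  have hle : Nat.find hex ≤ 2 * n + 1 := Nat.find_min' hex ⟨by omega, Or.inr rfl⟩
  refine ⟨Nat.find hex - 1, ha.1, by omega, by omega, fun i hai hib => hmin i hai (by omega),
    h.1, ?_⟩
  rcases hspec.2 with hs | h2n
  · exact Or.inr (by rwa [Nat.sub_add_cancel (by omega)])
  · exact Or.inl (by omega)

end Bubbles

section BubbleCount

variable {n : ℕ}

lemma card_lcds (n : ℕ) : (lcds n).card = doubleFact n := by
  simpa using card_lcds_filter_subset_shortChords (n := n) (Finset.empty_subset _) (by simp)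

lemma card_lcds_filter_isShort {t : ℕ} (ht : t ∈ Finset.Icc 1 (2 * n - 1)) :
    ((lcds n).filter fun f => IsShort n f t).card = doubleFact (n - 1) := by
  simpa using card_lcds_filter_subset_shortChords (n := n) (Finset.singleton_subset_iff.2 ht)
    (by simp)

lemma card_lcds_filter_isShort_and_isShort_add_two {t : ℕ} (ht : 1 ≤ t) (ht' : t + 2 < 2 * n) :
    ((lcds n).filter fun f => IsShort n f t ∧ IsShort n f (t + 2)).card = doubleFact (n - 2) := by
  have hS : {t, t + 2} ⊆ Finset.Icc 1 (2 * n - 1) := by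
    intro i hi
    simp only [Finset.mem_insert, Finset.mem_singleton] at hi
    rw [Finset.mem_Icc]; omega
  have h := card_lcds_filter_subset_shortChords hS (by simp; omega)
  rw [Finset.card_pair (by omega)] at h
  simpa [Finset.insert_subset_iff] using h

noncomputable def bubbleStartCount (n a : ℕ) : ℕ :=
  ((lcds n).filter fun f => IsBubbleStart n f a).card

lemma bubbleStartCount_one_add (hn : 1 ≤ n) :
    bubbleStartCount n 1 + doubleFact (n - 1) = doubleFact n := by
  have h := Finset.card_filter_add_card_filter_not (s := lcds n) (fun f => IsShort n f 1)
  rw [card_lcds, card_lcds_filter_isShort (Finset.mem_Icc.2 ⟨le_rfl, by omega⟩)] at h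
  simpa [bubbleStartCount, IsBubbleStart, add_comm] using h

lemma bubbleStartCount_two : bubbleStartCount n 2 = 0 := by
  simp [bubbleStartCount, IsBubbleStart, IsShort]

lemma bubbleStartCount_add {a : ℕ} (ha : 2 < a) (ha' : a < 2 * n) :
    bubbleStartCount n a + doubleFact (n - 2) = doubleFact (n - 1) := by
  have h := Finset.card_filter_add_card_filter_not
    (s := (lcds n).filter fun f => IsShort n f (a - 2)) (fun f => IsShort n f a)
  have h2 :=
    card_lcds_filter_isShort_and_isShort_add_two (n := n) (t := a - 2) (by omega) (by omega)
  rw [Nat.sub_add_cancel (by omega : 2 ≤ a)] at h2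
  rw [card_lcds_filter_isShort (Finset.mem_Icc.2 ⟨by omega, by omega⟩), Finset.filter_filter,
    Finset.filter_filter, h2] at h
  simpa [bubbleStartCount, IsBubbleStart, show a ≠ 1 by omega, add_comm] using h

lemma bubbleStartCount_two_mul (hn : 2 ≤ n) :
    bubbleStartCount n (2 * n) = doubleFact (n - 1) := by
  rw [← card_lcds_filter_isShort (t := 2 * n - 2) (Finset.mem_Icc.2 ⟨by omega, by omega⟩)]
  refine congrArg _ (Finset.filter_congr fun f _ => ?_)
  have : ¬ IsShort n f (2 * n) := fun h => h.lt_two_mul.false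
  simp [IsBubbleStart, this, show 2 * n ≠ 1 by omega]

theorem sum_bubbleStartCount (hn : 2 ≤ n) :
    ∑ a ∈ Finset.Icc 1 (2 * n), bubbleStartCount n a + 3 * doubleFact (n - 1)
      = 2 * doubleFact n := by
  obtain ⟨m, rfl⟩ : ∃ m, n = m + 2 := ⟨n - 2, by omega⟩
  have hsplit : ∑ a ∈ Finset.Icc 1 (2 * (m + 2)), bubbleStartCount (m + 2) a
      = bubbleStartCount (m + 2) 1 + bubbleStartCount (m + 2) 2
        + ∑ a ∈ Finset.Ioo 2 (2 * (m + 2)), bubbleStartCount (m + 2) a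
        + bubbleStartCount (m + 2) (2 * (m + 2)) := by
    rw [← Finset.add_sum_Ioc_eq_sum_Icc (by omega), ← Finset.Icc_add_one_left_eq_Ioc,
      ← Finset.add_sum_Ioc_eq_sum_Icc (by omega), ← Finset.sum_Ioo_add_eq_sum_Ioc (by omega)]
    simp only [Nat.reduceAdd, add_assoc]
  have hmiddle : ∑ a ∈ Finset.Ioo 2 (2 * (m + 2)), bubbleStartCount (m + 2) a
      + (2 * m + 1) * doubleFact m = (2 * m + 1) * doubleFact (m + 1) := by
    have hcard : (Finset.Ioo 2 (2 * (m + 2))).card = 2 * m + 1 := by simp; omega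
    have h := Finset.sum_congr rfl fun a ha =>
      bubbleStartCount_add (n := m + 2) (Finset.mem_Ioo.1 ha).1 (Finset.mem_Ioo.1 ha).2
    rw [Finset.sum_add_distrib, Finset.sum_const, Finset.sum_const, hcard] at h
    simpa using h
  have h1 := bubbleStartCount_one_add (n := m + 2) (by omega)
  have h2n := bubbleStartCount_two_mul (n := m + 2) (by omega)
  simp only [show m + 2 - 1 = m + 1 by omega] at h1 h2n ⊢
  rw [hsplit, bubbleStartCount_two, h2n]
  rw [← doubleFact_succ] at hmiddle
  linarith [doubleFact_succ (m + 1)]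

end BubbleCount

section BubbleSizes

variable {n : ℕ}

noncomputable def bubbles (n : ℕ) : Finset ((Fin (2 * n) → Fin (2 * n)) × ℕ × ℕ) :=
  (Finset.univ ×ˢ (Finset.Icc 1 (2 * n) ×ˢ Finset.Icc 1 (2 * n))).filter
    fun x => IsLCD n x.1 ∧ IsBubble n x.1 x.2.1 x.2.2

lemma sum_B_eq_card_bubbles (n : ℕ) : ∑ p ∈ Finset.Icc 1 (2 * n), B n p = (bubbles n).card := by
  rw [Finset.card_eq_sum_card_fiberwise (f := fun x => x.2.2 - x.2.1 + 1)
    (t := Finset.Icc 1 (2 * n))]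
  · refine Finset.sum_congr rfl fun p _ => ?_
    rw [B, bubbles, Finset.filter_filter]
    simp only [and_assoc]
  · intro x hx
    simp only [bubbles, Finset.mem_coe, Finset.mem_filter, Finset.mem_product,
      Finset.mem_Icc] at hx ⊢
    omega

lemma card_bubbles (n : ℕ) :
    (bubbles n).card = ∑ a ∈ Finset.Icc 1 (2 * n), bubbleStartCount n a := by
  calc (bubbles n).card
      = ((lcds n ×ˢ Finset.Icc 1 (2 * n)).filter fun x => IsBubbleStart n x.1 x.2).card := by
        refine Finset.card_bij (fun x _ => (x.1, x.2.1)) ?_ ?_ ?_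
        · rintro ⟨f, a, b⟩ hx
          simp only [bubbles, lcds, Finset.mem_filter, Finset.mem_product, Finset.mem_univ,
            true_and] at hx ⊢
          exact ⟨⟨hx.2.1, hx.1.1⟩, hx.2.2.isBubbleStart hx.2.1⟩
        · rintro ⟨f, a, b⟩ hx ⟨f', a', b'⟩ hx' h
          simp only [Prod.mk.injEq] at h
          obtain ⟨rfl, rfl⟩ := h
          simp only [bubbles, Finset.mem_filter] at hx hx'
          rw [hx.2.2.right_unique hx.2.1 hx'.2.2]
        · rintro ⟨f, a⟩ hx
          simp only [lcds, Finset.mem_filter, Finset.mem_product, Finset.mem_univ, true_and] at hx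
          obtain ⟨b, hb⟩ := hx.2.exists_isBubble hx.1.2
          refine ⟨(f, a, b), ?_, rfl⟩
          simp only [bubbles, Finset.mem_filter, Finset.mem_product, Finset.mem_univ, true_and,
            Finset.mem_Icc]
          have ⟨ha, hab, hb2n, _⟩ := hb
          exact ⟨⟨⟨ha, by omega⟩, by omega, hb2n⟩, hx.1.1, hb⟩
    _ = ∑ a ∈ Finset.Icc 1 (2 * n), bubbleStartCount n a := by
        rw [Finset.card_filter, Finset.sum_product_right]
        simp only [← Finset.card_filter, bubbleStartCount]

lemma B_two_mul_sub_one : B n (2 * n - 1) = 0 := by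
  refine Finset.card_eq_zero.2 (Finset.filter_false_of_mem ?_)
  rintro ⟨f, a, b⟩ - ⟨-, ⟨ha, hab, hb, -, hleft, hright⟩, hsize⟩
  dsimp only at *
  rcases hleft with rfl | hl
  · rcases hright with h | h
    · omega
    · have := h.lt_two_mul; omega
  · have := hl.one_le; omega

lemma B_two_mul (hn : 1 ≤ n) : B n (2 * n) = d n 0 := by
  refine Finset.card_nbij' Prod.fst (fun f => (f, 1, 2 * n)) ?_ ?_ ?_ ?_
  · rintro ⟨f, a, b⟩ hx
    simp only [Finset.coe_filter, Finset.mem_product, Finset.mem_univ, true_and, Finset.mem_Icc,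
      Set.mem_ofPred_eq, Finset.card_eq_zero, Finset.filter_eq_empty_iff] at hx ⊢
    obtain ⟨-, hf, ⟨ha, hab, hb, hfree, -⟩, hsize⟩ := hx
    exact ⟨hf, fun i hi => hfree i (by omega) (by omega)⟩
  · intro f hf
    simp only [Finset.coe_filter, Finset.mem_product, Finset.mem_univ, true_and, Finset.mem_Icc,
      Set.mem_ofPred_eq, Finset.card_eq_zero, Finset.filter_eq_empty_iff] at hf ⊢
    exact ⟨by omega, hf.1, ⟨le_rfl, by omega, le_rfl, fun i hi hi' hs => hf.2 ⟨hi, by omega⟩ hs,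
      Or.inl rfl, Or.inl rfl⟩, by omega⟩
  · rintro ⟨f, a, b⟩ hx
    simp only [Finset.coe_filter, Finset.mem_product, Finset.mem_Icc, Set.mem_ofPred_eq] at hx
    obtain ⟨⟨-, ha, hb⟩, -, -, hsize⟩ := hx
    simp only [Prod.mk.injEq, true_and]
    omega
  · intro f _
    rfl

theorem sum_B_add_d_zero (hn : 2 ≤ n) :
    ∑ p ∈ Finset.Icc 1 (2 * n - 2), B n p + d n 0 + 3 * doubleFact (n - 1) = 2 * doubleFact n := by
  have hsplit : ∑ p ∈ Finset.Icc 1 (2 * n), B n p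
      = ∑ p ∈ Finset.Icc 1 (2 * n - 2), B n p + B n (2 * n - 1) + B n (2 * n) := by
    obtain ⟨m, rfl⟩ : ∃ m, n = m + 1 := ⟨n - 1, by omega⟩
    rw [show 2 * (m + 1) - 1 = 2 * m + 1 by omega, show 2 * (m + 1) - 2 = 2 * m by omega,
      show 2 * (m + 1) = 2 * m + 1 + 1 by omega, Finset.sum_Icc_succ_top (by omega),
      Finset.sum_Icc_succ_top (by omega)]
  rw [← sum_bubbleStartCount hn, ← card_bubbles, ← sum_B_eq_card_bubbles, hsplit,
    B_two_mul_sub_one, B_two_mul (by omega), add_zero]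

end BubbleSizes

section InclusionExclusion

variable {n : ℕ}

lemma IsLCD.shortChords_sep {f : Fin (2 * n) → Fin (2 * n)} (hf : IsLCD n f) :
    ∀ i ∈ shortChords n f, i + 1 ∉ shortChords n f := fun _ hi hi1 =>
  (mem_shortChords.1 hi).not_succ hf (mem_shortChords.1 hi1)

/-- Double counting: the `j`-sets of short chords of a diagram are exactly the `j`-matchings of
the path `1 - 2 - ⋯ - 2n` it contains. -/
theorem sum_choose_card_shortChords (n j : ℕ) :
    ∑ f ∈ lcds n, (shortChords n f).card.choose j = pathMatch (2 * n) j * doubleFact (n - j) := by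
  set M := (Finset.Icc 1 (2 * n - 1)).powerset.filter fun S => S.card = j ∧ ∀ i ∈ S, i + 1 ∉ S
  have hM : ∀ S ∈ M, S ⊆ Finset.Icc 1 (2 * n - 1) ∧ S.card = j ∧ ∀ i ∈ S, i + 1 ∉ S :=
    fun S hS => by simpa [M] using hS
  calc ∑ f ∈ lcds n, (shortChords n f).card.choose j
      = ∑ f ∈ lcds n, (M.filter fun S => S ⊆ shortChords n f).card := by
        refine Finset.sum_congr rfl fun f hf => ?_
        rw [← Finset.card_powersetCard]
        congr 1
        ext S
        simp only [Finset.mem_powersetCard, Finset.mem_filter, Finset.mem_powerset, M]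
        have hsep := IsLCD.shortChords_sep (Finset.mem_filter.1 hf).2
        constructor
        · rintro ⟨hST, hcard⟩
          exact ⟨⟨hST.trans (Finset.filter_subset _ _), hcard,
            fun i hi hi1 => hsep i (hST hi) (hST hi1)⟩, hST⟩
        · rintro ⟨⟨-, hcard, -⟩, hST⟩
          exact ⟨hST, hcard⟩
    _ = ∑ S ∈ M, ((lcds n).filter fun f => S ⊆ shortChords n f).card := by
        simp only [Finset.card_filter]
        exact Finset.sum_comm
    _ = ∑ S ∈ M, doubleFact (n - j) := Finset.sum_congr rfl fun S hS => by
        rw [card_lcds_filter_subset_shortChords (hM S hS).1 (hM S hS).2.2, (hM S hS).2.1]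
    _ = pathMatch (2 * n) j * doubleFact (n - j) := by
        rw [Finset.sum_const, smul_eq_mul, pathMatch]

lemma neg_one_pow_mul_alternating_sum_choose_sub_nonneg (t k : ℕ) :
    0 ≤ (-1 : ℝ) ^ k * (∑ i ∈ Finset.range (k + 1), (-1 : ℝ) ^ i * t.choose i
      - if t = 0 then 1 else 0) := by
  rcases t with _ | t
  · simp [Finset.sum_range_succ', Nat.choose_zero_succ]
  · have h := Int.alternating_sum_range_choose_eq_choose (n := t) (m := k)
    have h' : ∑ i ∈ Finset.range (k + 1), (-1 : ℝ) ^ i * ((t + 1).choose i : ℝ)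
        = (-1) ^ k * t.choose k := by exact_mod_cast h
    rw [h', if_neg (Nat.succ_ne_zero t), sub_zero, ← mul_assoc, ← pow_add, ← two_mul,
      pow_mul, neg_one_sq, one_pow, one_mul]
    positivity

/-- `E[C(X, i)]` for the number `X` of short chords of a uniformly random diagram
on `2n` vertices. -/
noncomputable def shortChordMoment (n i : ℕ) : ℝ :=
  pathMatch (2 * n) i * doubleFact (n - i) / doubleFact n

lemma d_zero_eq_sum (n : ℕ) :
    (d n 0 : ℝ) = ∑ f ∈ lcds n, if (shortChords n f).card = 0 then 1 else 0 := by
  rw [Finset.sum_boole, d, lcds, Finset.filter_filter]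
  rfl

theorem bonferroni_d_zero (n k : ℕ) :
    0 ≤ (-1 : ℝ) ^ k * (∑ i ∈ Finset.range (k + 1), (-1 : ℝ) ^ i * shortChordMoment n i
      - d n 0 / doubleFact n) := by
  have hDF : (0 : ℝ) < doubleFact n := by exact_mod_cast doubleFact_pos n
  have hsum : ∑ i ∈ Finset.range (k + 1), (-1 : ℝ) ^ i * shortChordMoment n i - d n 0 / doubleFact n
      = (∑ f ∈ lcds n, (∑ i ∈ Finset.range (k + 1), (-1 : ℝ) ^ i * (shortChords n f).card.choose i
          - if (shortChords n f).card = 0 then 1 else 0)) / doubleFact n := by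
    simp only [Finset.sum_sub_distrib, d_zero_eq_sum, sub_div, Finset.sum_div,
      Finset.sum_comm (s := lcds n)]
    congr 1
    refine Finset.sum_congr rfl fun i _ => ?_
    simp only [mul_div_assoc, ← Finset.mul_sum, ← Finset.sum_div, ← Nat.cast_sum,
      sum_choose_card_shortChords, shortChordMoment, Nat.cast_mul]
  rw [hsum, mul_div_assoc', Finset.mul_sum]
  exact div_nonneg (Finset.sum_nonneg fun f _ =>
    neg_one_pow_mul_alternating_sum_choose_sub_nonneg _ _) hDF.le

end InclusionExclusion

open Filter Topology Asymptotics

section PathMatchings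

lemma pathMatch_le_choose (m j : ℕ) : pathMatch m j ≤ (m - 1).choose j :=
  calc pathMatch m j ≤ ((Finset.Icc 1 (m - 1)).powersetCard j).card := by
        rw [pathMatch, Finset.powersetCard_eq_filter]
        exact Finset.card_le_card (Finset.monotone_filter_right _ fun S _ h => h.1)
    _ = (m - 1).choose j := by simp

/-- A `j`-subset of `{1, …, m-1}` that is not a matching is `insert (i+1) T` for a
`(j-1)`-subset `T` and some `i ∈ T`. -/
lemma choose_le_pathMatch_add (m j : ℕ) :
    (m - 1).choose j ≤ pathMatch m j + (j - 1) * (m - 1).choose (j - 1) := by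
  set I := Finset.Icc 1 (m - 1)
  set W := I.powersetCard j
  have hcard : W.card = (m - 1).choose j := by rw [Finset.card_powersetCard, Nat.card_Icc]; rfl
  have hgood : (W.filter fun S => ∀ i ∈ S, i + 1 ∉ S).card = pathMatch m j := by
    simp only [pathMatch, W, I, Finset.powersetCard_eq_filter, Finset.filter_filter]
  have hbad : (W.filter fun S => ¬ ∀ i ∈ S, i + 1 ∉ S)
      ⊆ ((I.powersetCard (j - 1)).sigma id).image fun p => insert (p.2 + 1) p.1 := by
    intro S hS
    simp only [Finset.mem_filter, Finset.mem_powersetCard, W, not_forall, not_not] at hS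
    obtain ⟨⟨hSI, hSj⟩, i, hi, hi1⟩ := hS
    refine Finset.mem_image.2 ⟨⟨S.erase (i + 1), i⟩, ?_, Finset.insert_erase hi1⟩
    simp only [Finset.mem_sigma, Finset.mem_powersetCard, id, Finset.mem_erase]
    exact ⟨⟨(Finset.erase_subset _ _).trans hSI, by rw [Finset.card_erase_of_mem hi1, hSj]⟩,
      by omega, hi⟩
  have hsigma : ((I.powersetCard (j - 1)).sigma id).card = (j - 1) * (m - 1).choose (j - 1) := by
    simp only [Finset.card_sigma, id]
    rw [Finset.sum_congr rfl fun T hT => (Finset.mem_powersetCard.1 hT).2,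
      Finset.sum_const, Finset.card_powersetCard, smul_eq_mul, mul_comm]
    simp [I]
  rw [← hcard, ← hgood, ← Finset.card_filter_add_card_filter_not (s := W)
    (fun S => ∀ i ∈ S, i + 1 ∉ S), ← hsigma]
  exact Nat.add_le_add_left ((Finset.card_le_card hbad).trans Finset.card_image_le) _

lemma tendsto_choose_div_pow (j : ℕ) :
    Tendsto (fun N : ℕ => (N.choose j : ℝ) / N ^ j) atTop (𝓝 (1 / j !)) := by
  refine ((isEquivalent_choose j).div IsEquivalent.refl).symm.tendsto_nhds
    (tendsto_const_nhds.congr' ?_)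
  filter_upwards [eventually_ge_atTop 1] with N hN
  have : (N : ℝ) ^ j ≠ 0 := pow_ne_zero _ (by exact_mod_cast (by omega : N ≠ 0))
  simp only [Pi.div_apply]
  field_simp

theorem tendsto_pathMatch_succ_div_pow (j : ℕ) :
    Tendsto (fun N : ℕ => (pathMatch (N + 1) j : ℝ) / N ^ j) atTop (𝓝 (1 / j !)) := by
  have herr : Tendsto (fun N : ℕ => (N.choose j : ℝ) / N ^ j - j / N) atTop (𝓝 (1 / j !)) := by
    simpa using (tendsto_choose_div_pow j).sub (tendsto_const_div_atTop_nhds_zero_nat (j : ℝ))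
  refine tendsto_of_tendsto_of_tendsto_of_le_of_le' herr (tendsto_choose_div_pow j) ?_
    (Eventually.of_forall fun N => ?_)
  · filter_upwards [eventually_ge_atTop 1] with N hN
    have hN : (0 : ℝ) < N := by exact_mod_cast hN
    have hlow : (N.choose j : ℝ) ≤ pathMatch (N + 1) j + (j - 1 : ℕ) * N.choose (j - 1) := by
      exact_mod_cast choose_le_pathMatch_add (N + 1) j
    have hpow : ((j - 1 : ℕ) : ℝ) * N.choose (j - 1) * N ≤ j * N ^ j := by
      rcases j with _ | j
      · simp
      · have : (N.choose j : ℝ) ≤ N ^ j := by exact_mod_cast Nat.choose_le_pow N j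
        simp only [Nat.add_sub_cancel, Nat.cast_succ, pow_succ]
        have := mul_le_mul_of_nonneg_left this (by positivity : (0 : ℝ) ≤ j * N)
        nlinarith [pow_pos hN j]
    have key : (N.choose j : ℝ) * N ≤ pathMatch (N + 1) j * N + j * N ^ j := by
      linarith [mul_le_mul_of_nonneg_right hlow hN.le]
    have hNj : (0 : ℝ) < N ^ j := pow_pos hN j
    calc (N.choose j : ℝ) / N ^ j - j / N = (N.choose j * N - j * N ^ j) / (N ^ j * N) := by
          field_simp
      _ ≤ pathMatch (N + 1) j * N / (N ^ j * N) := by gcongr; linarith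
      _ = pathMatch (N + 1) j / N ^ j := by field_simp
  · gcongr
    exact_mod_cast pathMatch_le_choose (N + 1) j

end PathMatchings

section Limits

lemma doubleFact_eq_mul_prod {j n : ℕ} (h : j ≤ n) :
    (doubleFact n : ℝ)
      = doubleFact (n - j) * ∏ l ∈ Finset.range j, ((2 * n - 1 : ℕ) - 2 * l : ℝ) := by
  induction j with
  | zero => simp
  | succ j ih =>
    have hfactor : ((2 * (n - (j + 1)) + 1 : ℕ) : ℝ) = (2 * n - 1 : ℕ) - 2 * j := by
      rw [eq_sub_iff_add_eq]
      exact_mod_cast (by omega : 2 * (n - (j + 1)) + 1 + 2 * j = 2 * n - 1)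
    rw [ih (by omega), Finset.prod_range_succ, show n - j = n - (j + 1) + 1 by omega,
      doubleFact_succ, Nat.cast_mul, hfactor]
    ring

lemma tendsto_prod_sub_div_pow (j : ℕ) :
    Tendsto (fun N : ℕ => (∏ l ∈ Finset.range j, ((N : ℝ) - 2 * l)) / N ^ j) atTop (𝓝 1) := by
  have h := tendsto_finsetProd (Finset.range j) fun l _ =>
    (tendsto_const_nhds (x := (1 : ℝ))).sub (tendsto_const_div_atTop_nhds_zero_nat (2 * l : ℝ))
  simp only [sub_zero, Finset.prod_const_one] at h
  refine h.congr' ?_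
  filter_upwards [eventually_ge_atTop 1] with N hN
  have hN : (N : ℝ) ≠ 0 := by exact_mod_cast (by omega : N ≠ 0)
  rw [← Finset.card_range j, ← Finset.prod_const, Finset.card_range, ← Finset.prod_div_distrib]
  exact Finset.prod_congr rfl fun l _ => by field_simp

theorem tendsto_shortChordMoment (i : ℕ) :
    Tendsto (fun n => shortChordMoment n i) atTop (𝓝 (1 / i !)) := by
  have hN : Tendsto (fun n : ℕ => 2 * n - 1) atTop atTop :=
    tendsto_atTop_atTop.2 fun b => ⟨b + 1, fun n hn => by omega⟩
  have h := ((tendsto_pathMatch_succ_div_pow i).div (tendsto_prod_sub_div_pow i)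
    one_ne_zero).comp hN
  rw [div_one] at h
  refine h.congr' ?_
  filter_upwards [eventually_ge_atTop (i + 1)] with n hn
  have hprod := doubleFact_eq_mul_prod (n := n) (j := i) (by omega)
  have hDF : (doubleFact (n - i) : ℝ) ≠ 0 := by exact_mod_cast (doubleFact_pos _).ne'
  have hP : ∏ l ∈ Finset.range i, ((2 * n - 1 : ℕ) - 2 * l : ℝ) ≠ 0 := by
    intro h0
    rw [h0, mul_zero] at hprod
    exact (doubleFact_pos n).ne' (by exact_mod_cast hprod)
  have hpow : ((2 * n - 1 : ℕ) : ℝ) ^ i ≠ 0 := pow_ne_zero _ (by exact_mod_cast (by omega))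
  simp only [Function.comp, Pi.div_apply, shortChordMoment, hprod,
    Nat.sub_add_cancel (by omega : 1 ≤ 2 * n)]
  field_simp

lemma tendsto_sum_range_neg_one_pow_div_factorial :
    Tendsto (fun k => ∑ i ∈ Finset.range (k + 1), (-1 : ℝ) ^ i / i !) atTop
      (𝓝 (Real.exp 1)⁻¹) := by
  rw [← Real.exp_neg, Real.exp_eq_exp_ℝ]
  exact (NormedSpace.expSeries_div_hasSum_exp (-1 : ℝ)).tendsto_sum_nat.comp
    (tendsto_add_atTop_nat 1)

theorem tendsto_of_alternating_bounds {β : Type*} {l : Filter β} {x : β → ℝ} {a : ℕ → β → ℝ}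
    {A : ℕ → ℝ} {L : ℝ} (hbound : ∀ k b, 0 ≤ (-1) ^ k * (a k b - x b))
    (ha : ∀ k, Tendsto (a k) l (𝓝 (A k))) (hA : Tendsto A atTop (𝓝 L)) :
    Tendsto x l (𝓝 L) := by
  refine tendsto_order.2 ⟨fun c hc => ?_, fun c hc => ?_⟩
  · obtain ⟨k, hk⟩ := ((hA.comp (tendsto_atTop_atTop.2 fun b => ⟨b, fun k hk => by omega⟩ :
      Tendsto (fun k => 2 * k + 1) atTop atTop)).eventually (lt_mem_nhds hc)).exists
    filter_upwards [(ha _).eventually (lt_mem_nhds hk)] with b hb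
    have := hbound (2 * k + 1) b
    rw [pow_succ, pow_mul, neg_one_sq, one_pow, one_mul, neg_one_mul, neg_nonneg] at this
    linarith
  · obtain ⟨k, hk⟩ := ((hA.comp (tendsto_atTop_atTop.2 fun b => ⟨b, fun k hk => by omega⟩ :
      Tendsto (fun k => 2 * k) atTop atTop)).eventually (gt_mem_nhds hc)).exists
    filter_upwards [(ha _).eventually (gt_mem_nhds hk)] with b hb
    have := hbound (2 * k) b
    rw [pow_mul, neg_one_sq, one_pow, one_mul] at this
    linarith

theorem tendsto_d_zero_div_doubleFact :
    Tendsto (fun n => (d n 0 : ℝ) / doubleFact n) atTop (𝓝 (Real.exp 1)⁻¹) :=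
  tendsto_of_alternating_bounds (fun k n => bonferroni_d_zero n k)
    (fun k => tendsto_finsetSum _ fun i _ => (tendsto_shortChordMoment i).const_mul _)
    (by simpa only [mul_one_div] using tendsto_sum_range_neg_one_pow_div_factorial)

end Limits

lemma sum_B_div_doubleFact {n : ℕ} (hn : 2 ≤ n) :
    ((∑ p ∈ Finset.Icc 1 (2 * n - 2), B n p : ℕ) : ℝ) / doubleFact n
      = 2 - 3 / (2 * (n : ℝ) - 1) - d n 0 / doubleFact n := by
  obtain ⟨m, rfl⟩ : ∃ m, n = m + 1 := ⟨n - 1, by omega⟩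
  have hsum : (∑ p ∈ Finset.Icc 1 (2 * (m + 1) - 2), B (m + 1) p : ℝ) + d (m + 1) 0
      + 3 * doubleFact m = 2 * doubleFact (m + 1) := by
    exact_mod_cast sum_B_add_d_zero hn
  have hDF : (doubleFact (m + 1) : ℝ) = (2 * (m + 1 : ℕ) - 1) * doubleFact m := by
    rw [doubleFact_succ]; push_cast; ring
  have hm : (doubleFact m : ℝ) ≠ 0 := by exact_mod_cast (doubleFact_pos m).ne'
  have h2m : (2 * (m + 1 : ℕ) - 1 : ℝ) ≠ 0 := by
    push_cast; linarith [m.cast_nonneg (α := ℝ)]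
  rw [div_eq_iff (by rw [hDF]; exact mul_ne_zero h2m hm), Nat.cast_sum]
  rw [hDF] at hsum ⊢
  field_simp
  linear_combination hsum

/-- The number of bubbles of size at most `2n-2` is asymptotic to `(2 - e⁻¹)·(2n-1)!!`,
where `(2n-1)!! = (2n)!/(2^n·n!)`. -/
theorem truncated_bubble_count_asymptotic :
    Filter.Tendsto (fun n : ℕ =>
      ((∑ p ∈ Finset.Icc 1 (2*n-2), B n p : ℕ) : ℝ) / ((doubleFact n : ℕ) : ℝ))
      Filter.atTop (nhds (2 - (Real.exp 1)⁻¹)) := by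
  have h2n : Tendsto (fun n : ℕ => 2 * (n : ℝ) - 1) atTop atTop :=
    tendsto_atTop_add_const_right _ _ (tendsto_natCast_atTop_atTop.const_mul_atTop two_pos)
  have h3 : Tendsto (fun n : ℕ => 3 / (2 * (n : ℝ) - 1)) atTop (𝓝 0) :=
    tendsto_const_nhds.div_atTop h2n
  have hlim := ((tendsto_const_nhds (x := (2 : ℝ))).sub h3).sub tendsto_d_zero_div_doubleFact
  rw [sub_zero] at hlim
  exact hlim.congr' (eventually_atTop.2 ⟨2, fun n hn => (sum_B_div_doubleFact hn).symm⟩)
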